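/- Let q be a prime power, n, t, ℓ ∈ N, and let Q ∈ F_q[x_1,…,x_n] with highest-degree homogeneous part Q^H. Suppose for some u, v ∈ F_q^n the polynomial Q(c + u t_1 + v t_2) ∈ F_q[t_1,t_2] (for some c ∈ F_q^n) is identically zero together with all substituted Hasse derivatives Q^{(j)}(c + u t_1 + v t_2) for wt(j) < tℓ. Then (Q^H)^{(j)}(u t_1 + v t_2) = 0 in F_q[t_1,t_2] for all j with wt(j) < tℓ; that is, Q^H vanishes with multiplicity at least tℓ at the point u t_1 + v t_2 ∈ F_q(t_1,t_2)^n. -/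

import Mathlib

/-!
Hasse derivatives respect the grading: the coefficient of `x^e` in `Q^{(j)}` is a binomial
multiple of the coefficient of `x^(e+j)` in `Q`. Hence `Q^{(j)}` has degree at most
`deg Q - |j|`, and `(Q^H)^{(j)}` is its component of that degree (or zero if `|j| > deg Q`).
Taking top-degree components is multiplicative, so for `P` of degree at most `m` the
degree-`m` component of `P(c + u t₁ + v t₂)` is `P_m(u t₁ + v t₂)`. With `P = Q^{(j)}` the
left side vanishes by hypothesis.
-/

open MvPolynomial

/-- The multivariate Hasse derivative. -/
noncomputable def hasseDeriv {n : ℕ} {R : Type*} [CommRing R] (i : Fin n →₀ ℕ)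
    (f : MvPolynomial (Fin n) R) : MvPolynomial (Fin n) R :=
  (AddMonoidAlgebra.coeff f).sum fun d c =>
    (∏ k ∈ d.support ∪ i.support, Nat.choose (d k) (i k)) •
      MvPolynomial.monomial (d - i) c

/-- `f` vanishes to order (multiplicity) at least `m` at the point `a`. -/
def vanishesTo {n : ℕ} {R : Type*} [CommRing R] (f : MvPolynomial (Fin n) R)
    (a : Fin n → R) (m : ℕ) : Prop :=
  ∀ j : Fin n →₀ ℕ, (j.sum fun _ e => e) < m → MvPolynomial.eval a (hasseDeriv j f) = 0

namespace MvPolynomial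

variable {R σ τ : Type*} [CommSemiring R]

theorem homogeneousComponent_add_mul_of_totalDegree_le {f g : MvPolynomial σ R} {a b : ℕ}
    (hf : f.totalDegree ≤ a) (hg : g.totalDegree ≤ b) :
    homogeneousComponent (a + b) (f * g) =
      homogeneousComponent a f * homogeneousComponent b g := by
  classical
  ext e
  rw [coeff_homogeneousComponent]
  split_ifs with he
  · rw [coeff_mul, coeff_mul]
    refine Finset.sum_congr rfl fun x hx => ?_
    rw [Finset.HasAntidiagonal.mem_antidiagonal] at hx
    rw [coeff_homogeneousComponent, coeff_homogeneousComponent]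
    by_cases hfx : coeff x.1 f = 0
    · simp [hfx]
    by_cases hgx : coeff x.2 g = 0
    · simp [hgx]
    have hx1 : x.1.degree ≤ a := (le_totalDegree (mem_support_iff.2 hfx)).trans hf
    have hx2 : x.2.degree ≤ b := (le_totalDegree (mem_support_iff.2 hgx)).trans hg
    have hsum : x.1.degree + x.2.degree = a + b := by rw [← map_add, hx, he]
    rw [if_pos (by omega), if_pos (by omega)]
  · exact (((homogeneousComponent_isHomogeneous a f).mul
      (homogeneousComponent_isHomogeneous b g)).coeff_eq_zero he).symm

theorem homogeneousComponent_sum_prod_of_totalDegree_le {ι : Type*} (s : Finset ι)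
    (f : ι → MvPolynomial σ R) (a : ι → ℕ) (hf : ∀ i ∈ s, (f i).totalDegree ≤ a i) :
    homogeneousComponent (∑ i ∈ s, a i) (∏ i ∈ s, f i) =
      ∏ i ∈ s, homogeneousComponent (a i) (f i) := by
  classical
  induction s using Finset.induction_on with
  | empty => simp
  | insert i s hi ih =>
    have hs : (∏ j ∈ s, f j).totalDegree ≤ ∑ j ∈ s, a j :=
      (totalDegree_finsetProd s f).trans
        (Finset.sum_le_sum fun j hj => hf j (Finset.mem_insert_of_mem hj))
    rw [Finset.sum_insert hi, Finset.prod_insert hi, Finset.prod_insert hi,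
      homogeneousComponent_add_mul_of_totalDegree_le (hf i (Finset.mem_insert_self i s)) hs,
      ih fun j hj => hf j (Finset.mem_insert_of_mem hj)]

theorem homogeneousComponent_mul_pow_of_totalDegree_le {f : MvPolynomial σ R} {a : ℕ}
    (hf : f.totalDegree ≤ a) (k : ℕ) :
    homogeneousComponent (k * a) (f ^ k) = homogeneousComponent a f ^ k := by
  simpa using homogeneousComponent_sum_prod_of_totalDegree_le (Finset.range k) (fun _ => f)
    (fun _ => a) fun _ _ => hf

variable {φ : σ → MvPolynomial τ R}

theorem homogeneousComponent_aeval_monomial (hφ : ∀ i, (φ i).totalDegree ≤ 1) {m : ℕ}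
    {d : σ →₀ ℕ} (hd : d.degree ≤ m) (r : R) :
    homogeneousComponent m (aeval φ (monomial d r)) =
      aeval (fun i => homogeneousComponent 1 (φ i)) (homogeneousComponent m (monomial d r)) := by
  have hpow : ∀ i, (φ i ^ d i).totalDegree ≤ d i := fun i =>
    (totalDegree_pow _ _).trans (by simpa using Nat.mul_le_mul_left (d i) (hφ i))
  rw [aeval_monomial, Finsupp.prod, algebraMap_eq, homogeneousComponent_C_mul,
    homogeneousComponent_of_mem (isHomogeneous_monomial _ rfl)]
  rcases hd.lt_or_eq with hlt | rfl
  · rw [homogeneousComponent_eq_zero, if_neg hlt.ne', map_zero, mul_zero]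
    exact ((totalDegree_finsetProd _ _).trans (Finset.sum_le_sum fun i _ => hpow i)).trans_lt hlt
  · rw [if_pos rfl, aeval_monomial, Finsupp.prod, algebraMap_eq, Finsupp.degree_apply,
      homogeneousComponent_sum_prod_of_totalDegree_le _ _ _ fun i _ => hpow i]
    congr 1
    refine Finset.prod_congr rfl fun i _ => ?_
    simpa using homogeneousComponent_mul_pow_of_totalDegree_le (hφ i) (d i)

theorem homogeneousComponent_aeval_of_totalDegree_le (hφ : ∀ i, (φ i).totalDegree ≤ 1)
    {m : ℕ} {P : MvPolynomial σ R} (hP : P.totalDegree ≤ m) :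
    homogeneousComponent m (aeval φ P) =
      aeval (fun i => homogeneousComponent 1 (φ i)) (homogeneousComponent m P) := by
  conv_lhs => rw [P.as_sum]
  conv_rhs => rw [P.as_sum]
  simp only [map_sum]
  exact Finset.sum_congr rfl fun d hd =>
    homogeneousComponent_aeval_monomial hφ ((le_totalDegree hd).trans hP) _

theorem homogeneousComponent_aeval_C_add {ψ : σ → MvPolynomial τ R}
    (hψ : ∀ i, (ψ i).IsHomogeneous 1) (c : σ → R) {m : ℕ} {P : MvPolynomial σ R}
    (hP : P.totalDegree ≤ m) :
    homogeneousComponent m (aeval (fun i => C (c i) + ψ i) P) =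
      aeval ψ (homogeneousComponent m P) := by
  have hdeg : ∀ i, (C (c i) + ψ i).totalDegree ≤ 1 := fun i =>
    (totalDegree_add _ _).trans (max_le (by simp) (hψ i).totalDegree_le)
  have hlin : ∀ i, homogeneousComponent 1 (C (c i) + ψ i) = ψ i := fun i => by
    rw [map_add, homogeneousComponent_eq_self (hψ i),
      homogeneousComponent_of_mem (isHomogeneous_C τ (c i)), if_neg one_ne_zero, zero_add]
  simp only [homogeneousComponent_aeval_of_totalDegree_le hdeg hP, hlin]

end MvPolynomial

section HasseDeriv

variable {n : ℕ} {R : Type*} [CommRing R]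

theorem coeff_hasseDeriv (j : Fin n →₀ ℕ) (f : MvPolynomial (Fin n) R) (e : Fin n →₀ ℕ) :
    coeff e (hasseDeriv j f) =
      (∏ k ∈ (e + j).support ∪ j.support, Nat.choose ((e + j) k) (j k)) * coeff (e + j) f := by
  rw [hasseDeriv, MvPolynomial.sum_def, coeff_sum, Finset.sum_eq_single (e + j)]
  · rw [coeff_smul, add_tsub_cancel_right, coeff_monomial, if_pos rfl, nsmul_eq_mul]
  · intro b _ hb
    by_cases hjb : j ≤ b
    · rw [coeff_smul, coeff_monomial, if_neg fun h => hb (by rw [← h, tsub_add_cancel_of_le hjb]),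
        smul_zero]
    · obtain ⟨k, hk⟩ : ∃ k, b k < j k := by
        simpa [Finsupp.le_def] using hjb
      have hk_mem : k ∈ b.support ∪ j.support :=
        Finset.mem_union_right _ (Finsupp.mem_support_iff.2 (by omega))
      rw [Finset.prod_eq_zero hk_mem (Nat.choose_eq_zero_of_lt hk), zero_smul, coeff_zero]
  · intro h
    simp [notMem_support_iff.1 h]

theorem totalDegree_hasseDeriv_le (j : Fin n →₀ ℕ) (f : MvPolynomial (Fin n) R) :
    (hasseDeriv j f).totalDegree ≤ f.totalDegree - j.degree := by
  refine Finset.sup_le fun e he => ?_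
  rw [mem_support_iff, coeff_hasseDeriv] at he
  have hej : (e + j).degree ≤ f.totalDegree :=
    le_totalDegree (mem_support_iff.2 (right_ne_zero_of_mul he))
  rw [map_add] at hej
  change e.degree ≤ _
  omega

theorem hasseDeriv_homogeneousComponent {j : Fin n →₀ ℕ} {m : ℕ} (hj : j.degree ≤ m)
    (f : MvPolynomial (Fin n) R) :
    hasseDeriv j (homogeneousComponent m f) =
      homogeneousComponent (m - j.degree) (hasseDeriv j f) := by
  ext e
  have hdeg : (e + j).degree = m ↔ e.degree = m - j.degree := by rw [map_add]; omega
  simp only [coeff_hasseDeriv, coeff_homogeneousComponent, hdeg]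
  split_ifs <;> simp

theorem hasseDeriv_homogeneousComponent_of_lt {j : Fin n →₀ ℕ} {m : ℕ} (hj : m < j.degree)
    (f : MvPolynomial (Fin n) R) :
    hasseDeriv j (homogeneousComponent m f) = 0 := by
  ext e
  have hdeg : (e + j).degree ≠ m := by rw [map_add]; omega
  rw [coeff_hasseDeriv, coeff_homogeneousComponent, if_neg hdeg, mul_zero, coeff_zero]

end HasseDeriv

theorem homogeneous_part_vanishes_general {F : Type*} [Field F] {n : ℕ}
    (t ℓ : ℕ) (Q : MvPolynomial (Fin n) F) (c u v : Fin n → F)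
    (hQ : ∀ j : Fin n →₀ ℕ, (j.sum fun _ e => e) < t * ℓ →
      MvPolynomial.aeval
        (fun i => MvPolynomial.C (c i) + MvPolynomial.C (u i) * MvPolynomial.X 0 +
          MvPolynomial.C (v i) * MvPolynomial.X (1 : Fin 2))
        (hasseDeriv j Q) = 0) :
    ∀ j : Fin n →₀ ℕ, (j.sum fun _ e => e) < t * ℓ →
      MvPolynomial.aeval
        (fun i => MvPolynomial.C (u i) * MvPolynomial.X 0 +
          MvPolynomial.C (v i) * MvPolynomial.X (1 : Fin 2))
        (hasseDeriv j (MvPolynomial.homogeneousComponent Q.totalDegree Q)) = 0 := by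
  intro j hj
  rcases le_or_gt j.degree Q.totalDegree with hjQ | hQj
  · have hlin : ∀ i, (C (u i) * X 0 + C (v i) * X 1 : MvPolynomial (Fin 2) F).IsHomogeneous 1 :=
      fun i => (isHomogeneous_C_mul_X _ _).add (isHomogeneous_C_mul_X _ _)
    have htop := homogeneousComponent_aeval_C_add hlin c (totalDegree_hasseDeriv_le j Q)
    simp only [← add_assoc, hQ j hj, map_zero] at htop
    rw [hasseDeriv_homogeneousComponent hjQ, ← htop]
  · rw [hasseDeriv_homogeneousComponent_of_lt hQj, map_zero]

/-- if all substituted Hasse derivatives `Q^{(j)}(c + u t₁ + v t₂)` with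
`wt(j) < tℓ` vanish identically, then the highest-degree homogeneous part `Q^H` of `Q`
satisfies `(Q^H)^{(j)}(u t₁ + v t₂) = 0` in `F_q[t₁,t₂]` for all `j` with `wt(j) < tℓ`;
i.e. `Q^H` vanishes with multiplicity at least `tℓ` at `u t₁ + v t₂`. -/
theorem homogeneous_part_vanishes {F : Type*} [Field F] [Fintype F] {n : ℕ}
    (t ℓ : ℕ) (Q : MvPolynomial (Fin n) F) (c u v : Fin n → F)
    (hQ : ∀ j : Fin n →₀ ℕ, (j.sum fun _ e => e) < t * ℓ →
      MvPolynomial.aeval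
        (fun i => MvPolynomial.C (c i) + MvPolynomial.C (u i) * MvPolynomial.X 0 +
          MvPolynomial.C (v i) * MvPolynomial.X (1 : Fin 2))
        (hasseDeriv j Q) = 0) :
    ∀ j : Fin n →₀ ℕ, (j.sum fun _ e => e) < t * ℓ →
      MvPolynomial.aeval
        (fun i => MvPolynomial.C (u i) * MvPolynomial.X 0 +
          MvPolynomial.C (v i) * MvPolynomial.X (1 : Fin 2))
        (hasseDeriv j (MvPolynomial.homogeneousComponent Q.totalDegree Q)) = 0 :=
  homogeneous_part_vanishes_general t ℓ Q c u v hQ
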